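/- Let X be a real Banach space, let δ > 0 and α > 1, and let A : X ⇉ X* be a monotone operator with nonempty graph satisfying ⟨x − y, x* − y*⟩ ≥ δ‖x − y‖^α for all (x, x*), (y, y*) ∈ gra A. Then A is ultramaximally monotone if and only if ran A = X*. -/

import Mathlib

open Pointwise Set NormedSpace

variable {X : Type*} [NormedAddCommGroup X] [NormedSpace ℝ X]

/-- A set-valued operator `A : X ⇉ X*`, identified with its graph, is monotone. -/
def IsMonotoneOp (A : Set (X × StrongDual ℝ X)) : Prop :=
  ∀ p ∈ A, ∀ q ∈ A, 0 ≤ (p.2 - q.2) (p.1 - q.1)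

/-- `A` is maximally monotone: monotone and every monotonically related pair belongs to it. -/
def IsMaxMonotone (A : Set (X × StrongDual ℝ X)) : Prop :=
  IsMonotoneOp A ∧
    ∀ (x : X) (xs : StrongDual ℝ X), (∀ p ∈ A, 0 ≤ (xs - p.2) (x - p.1)) → (x, xs) ∈ A

/-- `A` is ultramaximally monotone: monotone, and maximally monotone with respect to
`X** × X*`. -/
def IsUltraMaxMonotone (A : Set (X × StrongDual ℝ X)) : Prop :=
  IsMonotoneOp A ∧
    ∀ (xss : StrongDual ℝ (StrongDual ℝ X)) (xs : StrongDual ℝ X),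
      (∀ p ∈ A, 0 ≤ (xss - inclusionInDoubleDual ℝ X p.1) (xs - p.2)) →
      ∃ x : X, xss = inclusionInDoubleDual ℝ X x ∧ (x, xs) ∈ A

/-- `A` is maximally monotone of type (NI): for every `(x**, x*)`,
`inf_{(a,a*) ∈ gra A} ⟨x* − a*, x** − â⟩ ≤ 0`. -/
def IsTypeNI (A : Set (X × StrongDual ℝ X)) : Prop :=
  IsMaxMonotone A ∧
    ∀ (xss : StrongDual ℝ (StrongDual ℝ X)) (xs : StrongDual ℝ X) (ε : ℝ), 0 < ε →
      ∃ p ∈ A, (xss - inclusionInDoubleDual ℝ X p.1) (xs - p.2) < ε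

def domOp (A : Set (X × StrongDual ℝ X)) : Set X := {x | ∃ xs, (x, xs) ∈ A}

def ranOp (A : Set (X × StrongDual ℝ X)) : Set (StrongDual ℝ X) := {xs | ∃ x, (x, xs) ∈ A}

/-- The sum `A + B`: `gra (A+B) = {(x, a* + b*) : (x,a*) ∈ gra A, (x,b*) ∈ gra B}`. -/
def sumOp (A B : Set (X × StrongDual ℝ X)) : Set (X × StrongDual ℝ X) :=
  {p | ∃ as bs, (p.1, as) ∈ A ∧ (p.1, bs) ∈ B ∧ p.2 = as + bs}

/-- The Fitzpatrick function `F_A(x, x*) = sup_{(a,a*) ∈ gra A} (⟨x,a*⟩ + ⟨a,x*⟩ − ⟨a,a*⟩)`. -/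
noncomputable def fitz (A : Set (X × StrongDual ℝ X)) : X × StrongDual ℝ X → EReal :=
  fun q => ⨆ p : A, ((p.1.2 q.1 + q.2 p.1.1 - p.1.2 p.1.1 : ℝ) : EReal)

/-- The extended Fitzpatrick function
`Φ_A(x**, x*) = sup_{(a,a*) ∈ gra A} (⟨a*,x**⟩ + ⟨a,x*⟩ − ⟨a,a*⟩)` on `X** × X*`. -/
noncomputable def phiFitz (A : Set (X × StrongDual ℝ X)) : StrongDual ℝ (StrongDual ℝ X) × StrongDual ℝ X → EReal :=
  fun q => ⨆ p : A, ((q.1 p.1.2 + q.2 p.1.1 - p.1.2 p.1.1 : ℝ) : EReal)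

/-- The Fenchel conjugate of the Fitzpatrick function,
`F_A*(x*, x**) = sup_{(y,y*)} (⟨y,x*⟩ + ⟨y*,x**⟩ − F_A(y,y*))`. -/
noncomputable def fitzConj (A : Set (X × StrongDual ℝ X)) :
    StrongDual ℝ X × StrongDual ℝ (StrongDual ℝ X) → EReal :=
  fun r => ⨆ q : X × StrongDual ℝ X, (((r.1 q.1 + r.2 q.2 : ℝ) : EReal) - fitz A q)


/-- `A` is maximally monotone of type (FPV). -/
def IsFPV (A : Set (X × StrongDual ℝ X)) : Prop :=
  IsMaxMonotone A ∧
    ∀ U : Set X, IsOpen U → Convex ℝ U → (U ∩ domOp A).Nonempty →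
      ∀ x ∈ U, ∀ xs : StrongDual ℝ X,
        (∀ p ∈ A, p.1 ∈ U → 0 ≤ (xs - p.2) (x - p.1)) → (x, xs) ∈ A

/-- `A` is rectangular: `dom A × ran A ⊆ dom F_A`. -/
def IsRectangular (A : Set (X × StrongDual ℝ X)) : Prop :=
  (domOp A) ×ˢ (ranOp A) ⊆ {q : X × StrongDual ℝ X | fitz A q < ⊤}

/-- The graph of the duality map `J x = {x* : ⟨x,x*⟩ = ‖x‖² and ‖x*‖ = ‖x‖}`. -/
def dualityMapGraph : Set (X × StrongDual ℝ X) :=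
  {p | p.2 p.1 = ‖p.1‖ ^ 2 ∧ ‖p.2‖ = ‖p.1‖}

/-- The partial inf-convolution `(F₁ □₂ F₂)(x, x*) = inf_{v*} (F₁(x, x* − v*) + F₂(x, v*))`. -/
noncomputable def infConv2 (F1 F2 : X × StrongDual ℝ X → EReal) : X × StrongDual ℝ X → EReal :=
  fun q => ⨅ v : StrongDual ℝ X, (F1 (q.1, q.2 - v) + F2 (q.1, v))

/-!
If `ran A = X*` and `(x**, x*)` is monotonically related to `gra A`, pick `(a, x*) ∈ A` and
`(b_t, x* - t w) ∈ A` for `t > 0`. The relation gives `⟨b_t, w⟩ ≤ ⟨w, x**⟩`, while uniform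
monotonicity makes `A⁻¹` Hölder continuous, so `b_t → a`; hence `⟨a, w⟩ ≤ ⟨w, x**⟩` for all `w`
and `x** = â`.

Conversely, fix `x*` and `(a, a*) ∈ A`. For a convex combination of points `(zᵢ, zᵢ*) ∈ A` put
`v = x* - Σ wᵢ zᵢ*` and `m = Σ wᵢ ‖zᵢ - a‖`. The sum `Σ wᵢ ⟨zᵢ - a, x* - zᵢ*⟩` is at most `‖v‖ m`
by monotonicity and at most `‖x* - a*‖ m - δ m^α` by uniform monotonicity and Jensen, hence at
most `‖v‖ (‖x* - a*‖ / δ)^(1/(α-1))`. So the convex hull of the points `(x* - z*, ⟨z, x* - z*⟩)`,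
`(z, z*) ∈ A`, lies below the graph of `v ↦ M‖v‖` for some `M`; separating it from the open cone
above that graph yields `x** ∈ X**` with `⟨z, x* - z*⟩ ≤ ⟨x* - z*, x**⟩` on `gra A`, and
ultramaximality puts `x*` in `ran A`.
-/

open Filter Topology

def IsUniformlyMonotoneOp (A : Set (X × StrongDual ℝ X)) (δ α : ℝ) : Prop :=
  ∀ p ∈ A, ∀ q ∈ A, δ * ‖p.1 - q.1‖ ^ α ≤ (p.2 - q.2) (p.1 - q.1)

lemma nonpos_of_forall_pos_mul_lt {a u : ℝ} (h : ∀ t > 0, t * a < u) : a ≤ 0 := by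
  by_contra! ha
  have := h ((|u| + 1) / a) (by positivity)
  rw [div_mul_cancel₀ _ ha.ne'] at this
  linarith [le_abs_self u]

lemma nonneg_of_forall_pos_mul_lt {a u : ℝ} (h : ∀ t > 0, t * a < u) : 0 ≤ u := by
  by_contra! hu
  rcases (nonpos_of_forall_pos_mul_lt h).lt_or_eq with ha | rfl
  · have := h (u / a) (div_pos_of_neg_of_neg hu ha)
    rw [div_mul_cancel₀ _ ha.ne] at this
    exact this.false
  · linarith [h 1 one_pos]

lemma le_mul_rpow_inv_of_le_of_le {G V K δ α m : ℝ} (hV : 0 ≤ V) (hK : 0 ≤ K) (hδ : 0 < δ)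
    (hα : 1 < α) (hm : 0 ≤ m) (h₁ : G ≤ V * m) (h₂ : G ≤ K * m - δ * m ^ α) :
    G ≤ V * (K / δ) ^ (α - 1)⁻¹ := by
  rcases le_or_gt m ((K / δ) ^ (α - 1)⁻¹) with hle | hlt
  · exact h₁.trans (mul_le_mul_of_nonneg_left hle hV)
  · have hm₀ : 0 < m := (Real.rpow_nonneg (div_nonneg hK hδ.le) _).trans_lt hlt
    have hK' : K < δ * m ^ (α - 1) := by
      rw [Real.rpow_inv_lt_iff_of_pos (div_nonneg hK hδ.le) hm (by linarith), div_lt_iff₀' hδ]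
        at hlt
      exact hlt
    have hKm : K * m ≤ δ * m ^ α := by
      calc K * m ≤ δ * m ^ (α - 1) * m := mul_le_mul_of_nonneg_right hK'.le hm
        _ = δ * m ^ α := by rw [mul_assoc, ← Real.rpow_add_one hm₀.ne', sub_add_cancel]
    have := mul_nonneg hV (Real.rpow_nonneg (div_nonneg hK hδ.le) (α - 1)⁻¹)
    linarith

section Separation

variable {E : Type*} [NormedAddCommGroup E] [NormedSpace ℝ E]

lemma convex_setOf_mul_norm_lt {M : ℝ} (hM : 0 ≤ M) :
    Convex ℝ {p : E × ℝ | M * ‖p.1‖ < p.2} := by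
  refine convex_iff_forall_pos.2 fun p hp q hq a b ha hb hab => ?_
  simp only [Set.mem_ofPred_eq, Prod.fst_add, Prod.smul_fst, Prod.snd_add, Prod.smul_snd,
    smul_eq_mul] at hp hq ⊢
  calc M * ‖a • p.1 + b • q.1‖ ≤ a * (M * ‖p.1‖) + b * (M * ‖q.1‖) := by
        have := norm_add_le (a • p.1) (b • q.1)
        rw [norm_smul, norm_smul, Real.norm_of_nonneg ha.le, Real.norm_of_nonneg hb.le] at this
        nlinarith
    _ < a * p.2 + b * q.2 := by gcongr

lemma exists_dual_ge_of_convexHull_le_mul_norm {C : Set (E × ℝ)} {M : ℝ} (hM : 0 ≤ M)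
    (hC : ∀ p ∈ convexHull ℝ C, p.2 ≤ M * ‖p.1‖) :
    ∃ φ : StrongDual ℝ E, ∀ p ∈ C, p.2 ≤ φ p.1 := by
  set O := {p : E × ℝ | M * ‖p.1‖ < p.2}
  have hO_open : IsOpen O := isOpen_lt (by fun_prop) continuous_snd
  have hdisj : Disjoint O (convexHull ℝ C) :=
    disjoint_left.2 fun p hpO hpC => (hC p hpC).not_gt hpO
  obtain ⟨f, u, hfO, hfC⟩ := geometric_hahn_banach_open (convex_setOf_mul_norm_lt hM) hO_open
    (convex_convexHull ℝ C) hdisj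
  set g := f.comp (ContinuousLinearMap.inl ℝ E ℝ)
  set c := f (0, 1)
  have hf : ∀ p : E × ℝ, f p = g p.1 + p.2 * c := fun p => by
    have hp : p = (p.1, 0) + p.2 • ((0 : E), (1 : ℝ)) := by ext <;> simp
    conv_lhs => rw [hp, map_add, map_smul]
    rfl
  -- `O` is a cone, so `f < u` on `O` forces `f ≤ 0` on `O` and `0 ≤ u`
  have hcone : ∀ p ∈ O, ∀ t > 0, t * f p < u := fun p hp t ht => by
    rw [← smul_eq_mul, ← map_smul]
    refine hfO _ ?_
    simp only [O, Set.mem_ofPred_eq, Prod.smul_fst, Prod.smul_snd, norm_smul, smul_eq_mul,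
      Real.norm_of_nonneg ht.le] at hp ⊢
    nlinarith
  have h01 : ((0 : E), (1 : ℝ)) ∈ O := by simp [O]
  have hu : 0 ≤ u := nonneg_of_forall_pos_mul_lt (hcone _ h01)
  have hc : c ≤ 0 := nonpos_of_forall_pos_mul_lt (hcone _ h01)
  refine ⟨(-c)⁻¹ • g, fun p hp => ?_⟩
  have hfp := hfC p (subset_convexHull ℝ C hp)
  rw [hf] at hfp
  have hc' : c < 0 := by
    refine hc.lt_of_ne fun hc0 => ?_
    have hg : ∀ v, g v ≤ 0 := fun v => nonpos_of_forall_pos_mul_lt fun t ht => by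
      simpa [hf, hc0] using hcone (v, M * ‖v‖ + 1) (by simp [O]) t ht
    have hgp : g p.1 = 0 := le_antisymm (hg _) (by simpa using hg (-p.1))
    have h1 : c < u := hfO _ h01
    rw [hgp, hc0] at hfp
    linarith
  rw [smul_apply, smul_eq_mul, inv_mul_eq_div, le_div_iff₀ (neg_pos.2 hc')]
  nlinarith

end Separation

lemma sum_smul_apply_sum_smul_le {ι : Type*} (t : Finset ι) (w : ι → ℝ)
    (z : ι → X × StrongDual ℝ X) (hw₁ : ∑ i ∈ t, w i = 1) (hw₀ : ∀ i ∈ t, 0 ≤ w i)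
    (hz : ∀ i ∈ t, ∀ j ∈ t, 0 ≤ ((z i).2 - (z j).2) ((z i).1 - (z j).1)) :
    (∑ i ∈ t, w i • (z i).2) (∑ i ∈ t, w i • (z i).1) ≤ ∑ i ∈ t, w i * (z i).2 (z i).1 := by
  have hsum : 0 ≤ ∑ i ∈ t, ∑ j ∈ t, w i * w j * ((z i).2 - (z j).2) ((z i).1 - (z j).1) :=
    Finset.sum_nonneg fun i hi => Finset.sum_nonneg fun j hj =>
      mul_nonneg (mul_nonneg (hw₀ i hi) (hw₀ j hj)) (hz i hi j hj)
  have hswap : ∑ i ∈ t, ∑ j ∈ t, w i * w j * (z i).2 (z j).1 =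
      ∑ i ∈ t, ∑ j ∈ t, w i * w j * (z j).2 (z i).1 := by
    rw [Finset.sum_comm]
    exact Finset.sum_congr rfl fun _ _ => Finset.sum_congr rfl fun _ _ => by ring
  have hexpand : ∑ i ∈ t, ∑ j ∈ t, w i * w j * ((z i).2 - (z j).2) ((z i).1 - (z j).1) =
      2 * (∑ i ∈ t, w i * (z i).2 (z i).1 -
        (∑ i ∈ t, w i • (z i).2) (∑ i ∈ t, w i • (z i).1)) := by
    simp only [map_sub, sub_apply, mul_sub, Finset.sum_sub_distrib, hswap]
    rw [Finset.sum_comm (f := fun i j => w i * w j * (z j).2 (z j).1)]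
    simp only [← Finset.sum_mul, ← Finset.mul_sum, hw₁, mul_one, one_mul]
    simp only [map_sum, sum_apply, map_smul, smul_apply, smul_eq_mul, Finset.mul_sum]
    ring_nf
    simp only [Finset.sum_mul]
  linarith

lemma IsMonotoneOp.sum_mul_apply_sub_le {A : Set (X × StrongDual ℝ X)}
    (hmono : IsMonotoneOp A) (x₀ : X) (xs : StrongDual ℝ X) {ι : Type*} (t : Finset ι)
    (w : ι → ℝ) (z : ι → X × StrongDual ℝ X) (hw₁ : ∑ i ∈ t, w i = 1) (hw₀ : ∀ i ∈ t, 0 ≤ w i)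
    (hz : ∀ i ∈ t, z i ∈ A) :
    ∑ i ∈ t, w i * (xs - (z i).2) ((z i).1 - x₀) ≤
      ‖xs - ∑ i ∈ t, w i • (z i).2‖ * ∑ i ∈ t, w i * ‖(z i).1 - x₀‖ := by
  set u : ι → X := fun i => (z i).1 - x₀
  set v := xs - ∑ i ∈ t, w i • (z i).2
  have hgram := sum_smul_apply_sum_smul_le t w (fun i => (u i, (z i).2)) hw₁ hw₀
    fun i hi j hj => by simpa [u] using hmono _ (hz i hi) _ (hz j hj)
  have hū : ‖∑ i ∈ t, w i • u i‖ ≤ ∑ i ∈ t, w i * ‖u i‖ := (norm_sum_le _ _).trans <|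
    Finset.sum_le_sum fun i hi => by rw [norm_smul, Real.norm_of_nonneg (hw₀ i hi)]
  have hsplit : ∑ i ∈ t, w i * (xs - (z i).2) (u i) = v (∑ i ∈ t, w i • u i) +
      ((∑ i ∈ t, w i • (z i).2) (∑ i ∈ t, w i • u i) - ∑ i ∈ t, w i * (z i).2 (u i)) := by
    simp only [v, sub_apply, map_sum, map_smul, smul_eq_mul, mul_sub, Finset.sum_sub_distrib]
    ring
  calc ∑ i ∈ t, w i * (xs - (z i).2) (u i) ≤ v (∑ i ∈ t, w i • u i) := by
        simp only at hgram; linarith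
    _ ≤ ‖v‖ * ‖∑ i ∈ t, w i • u i‖ := (le_abs_self _).trans (v.le_opNorm _)
    _ ≤ ‖v‖ * ∑ i ∈ t, w i * ‖u i‖ := by gcongr

namespace IsUniformlyMonotoneOp

variable {A : Set (X × StrongDual ℝ X)} {δ α : ℝ}

lemma norm_sub_le (hA : IsUniformlyMonotoneOp A δ α) (hδ : 0 < δ)
    (hα : 1 < α) {p q : X × StrongDual ℝ X} (hp : p ∈ A) (hq : q ∈ A) :
    ‖p.1 - q.1‖ ≤ (‖p.2 - q.2‖ / δ) ^ (α - 1)⁻¹ := by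
  rcases (norm_nonneg (p.1 - q.1)).eq_or_lt with h0 | hpos
  · rw [← h0]; positivity
  rw [Real.le_rpow_inv_iff_of_pos hpos.le (by positivity) (by linarith), le_div_iff₀ hδ]
  have hunif := hA p hp q hq
  have hbound : (p.2 - q.2) (p.1 - q.1) ≤ ‖p.2 - q.2‖ * ‖p.1 - q.1‖ :=
    (le_abs_self _).trans ((p.2 - q.2).le_opNorm _)
  rw [← sub_add_cancel α 1, Real.rpow_add_one hpos.ne'] at hunif
  refine le_of_mul_le_mul_right ?_ hpos
  linarith

lemma sum_mul_apply_sub_le (hA : IsUniformlyMonotoneOp A δ α) (hδ : 0 ≤ δ) (hα : 1 < α)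
    {a : X × StrongDual ℝ X} (ha : a ∈ A) (xs : StrongDual ℝ X) {ι : Type*} (t : Finset ι)
    (w : ι → ℝ) (z : ι → X × StrongDual ℝ X) (hw₁ : ∑ i ∈ t, w i = 1) (hw₀ : ∀ i ∈ t, 0 ≤ w i)
    (hz : ∀ i ∈ t, z i ∈ A) :
    ∑ i ∈ t, w i * (xs - (z i).2) ((z i).1 - a.1) ≤
      ‖xs - a.2‖ * (∑ i ∈ t, w i * ‖(z i).1 - a.1‖) -
        δ * (∑ i ∈ t, w i * ‖(z i).1 - a.1‖) ^ α := by
  set u : ι → X := fun i => (z i).1 - a.1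
  have hterm : ∀ i ∈ t, (xs - (z i).2) (u i) ≤ ‖xs - a.2‖ * ‖u i‖ - δ * ‖u i‖ ^ α := by
    intro i hi
    have h₁ : δ * ‖u i‖ ^ α ≤ ((z i).2 - a.2) (u i) := hA _ (hz i hi) _ ha
    have h₂ : (xs - a.2) (u i) ≤ ‖xs - a.2‖ * ‖u i‖ :=
      (le_abs_self _).trans ((xs - a.2).le_opNorm _)
    have h₃ : (xs - (z i).2) (u i) = (xs - a.2) (u i) - ((z i).2 - a.2) (u i) := by
      simp only [sub_apply]; ring
    linarith
  have hJensen : (∑ i ∈ t, w i * ‖u i‖) ^ α ≤ ∑ i ∈ t, w i * ‖u i‖ ^ α :=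
    Real.rpow_arith_mean_le_arith_mean_rpow t w (fun i => ‖u i‖) hw₀ hw₁
      (fun i _ => norm_nonneg _) hα.le
  calc ∑ i ∈ t, w i * (xs - (z i).2) (u i)
      ≤ ∑ i ∈ t, w i * (‖xs - a.2‖ * ‖u i‖ - δ * ‖u i‖ ^ α) :=
        Finset.sum_le_sum fun i hi => mul_le_mul_of_nonneg_left (hterm i hi) (hw₀ i hi)
    _ = ‖xs - a.2‖ * (∑ i ∈ t, w i * ‖u i‖) - δ * ∑ i ∈ t, w i * ‖u i‖ ^ α := by
        rw [Finset.mul_sum, Finset.mul_sum, ← Finset.sum_sub_distrib]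
        exact Finset.sum_congr rfl fun i _ => by ring
    _ ≤ ‖xs - a.2‖ * (∑ i ∈ t, w i * ‖u i‖) - δ * (∑ i ∈ t, w i * ‖u i‖) ^ α := by gcongr

lemma sum_mul_apply_le (hmono : IsMonotoneOp A) (hA : IsUniformlyMonotoneOp A δ α)
    (hδ : 0 < δ) (hα : 1 < α) {a : X × StrongDual ℝ X} (ha : a ∈ A) (xs : StrongDual ℝ X)
    {ι : Type*} (t : Finset ι) (w : ι → ℝ) (z : ι → X × StrongDual ℝ X)
    (hw₁ : ∑ i ∈ t, w i = 1) (hw₀ : ∀ i ∈ t, 0 ≤ w i) (hz : ∀ i ∈ t, z i ∈ A) :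
    ∑ i ∈ t, w i * (xs - (z i).2) (z i).1 ≤
      (‖a.1‖ + (‖xs - a.2‖ / δ) ^ (α - 1)⁻¹) * ‖xs - ∑ i ∈ t, w i • (z i).2‖ := by
  set v := xs - ∑ i ∈ t, w i • (z i).2
  have hsplit : ∑ i ∈ t, w i * (xs - (z i).2) (z i).1 =
      v a.1 + ∑ i ∈ t, w i * (xs - (z i).2) ((z i).1 - a.1) := by
    simp only [v, map_sub, mul_sub, Finset.sum_sub_distrib, sub_apply, sum_apply, smul_apply,
      smul_eq_mul, ← Finset.sum_mul, hw₁]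
    ring
  have hva : v a.1 ≤ ‖v‖ * ‖a.1‖ := (le_abs_self _).trans (v.le_opNorm _)
  have hbound := le_mul_rpow_inv_of_le_of_le (norm_nonneg v) (norm_nonneg _) hδ hα
    (Finset.sum_nonneg fun i hi => mul_nonneg (hw₀ i hi) (norm_nonneg _))
    (hmono.sum_mul_apply_sub_le a.1 xs t w z hw₁ hw₀ hz)
    (hA.sum_mul_apply_sub_le hδ.le hα ha xs t w z hw₁ hw₀ hz)
  rw [hsplit]
  linarith

lemma exists_bidual_monotonicallyRelated (hne : A.Nonempty)
    (hmono : IsMonotoneOp A) (hA : IsUniformlyMonotoneOp A δ α) (hδ : 0 < δ) (hα : 1 < α)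
    (xs : StrongDual ℝ X) :
    ∃ xss : StrongDual ℝ (StrongDual ℝ X),
      ∀ p ∈ A, 0 ≤ (xss - inclusionInDoubleDual ℝ X p.1) (xs - p.2) := by
  obtain ⟨a, ha⟩ := hne
  let ψ : A → StrongDual ℝ X × ℝ := fun p => (xs - p.1.2, (xs - p.1.2) p.1.1)
  have hψ : ∀ p ∈ convexHull ℝ (range ψ),
      p.2 ≤ (‖a.1‖ + (‖xs - a.2‖ / δ) ^ (α - 1)⁻¹) * ‖p.1‖ := by
    rw [convexHull_range_eq_exists_affineCombination]
    rintro _ ⟨t, w, hw₀, hw₁, rfl⟩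
    have hbary : ∑ i ∈ t, w i • (xs - i.1.2) = xs - ∑ i ∈ t, w i • i.1.2 := by
      simp only [smul_sub, Finset.sum_sub_distrib, ← Finset.sum_smul, hw₁, one_smul]
    rw [Finset.affineCombination_eq_linear_combination _ _ _ hw₁]
    simp only [Prod.fst_sum, Prod.snd_sum, Prod.smul_fst, Prod.smul_snd, smul_eq_mul, ψ, hbary]
    exact sum_mul_apply_le hmono hA hδ hα ha xs t w Subtype.val hw₁ hw₀ fun i _ => i.2
  obtain ⟨φ, hφ⟩ := exists_dual_ge_of_convexHull_le_mul_norm (by positivity) hψ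
  refine ⟨φ, fun p hp => ?_⟩
  have h : (xs - p.2) p.1 ≤ φ (xs - p.2) := hφ _ ⟨⟨p, hp⟩, rfl⟩
  rwa [sub_apply, dual_def, sub_nonneg]

lemma isUltraMaxMonotone (hmono : IsMonotoneOp A)
    (hA : IsUniformlyMonotoneOp A δ α) (hδ : 0 < δ) (hα : 1 < α) (hran : ranOp A = univ) :
    IsUltraMaxMonotone A := by
  refine ⟨hmono, fun xss xs hrel => ?_⟩
  have hsurj : ∀ ys, ∃ y, (y, ys) ∈ A := fun ys => (hran ▸ mem_univ ys : ys ∈ ranOp A)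
  obtain ⟨a, ha⟩ := hsurj xs
  refine ⟨a, ?_, ha⟩
  suffices h : ∀ w : StrongDual ℝ X, w a ≤ xss w by
    ext w
    exact le_antisymm (by simpa using h (-w)) (h w)
  intro w
  choose b hb using fun t : ℝ => hsurj (xs - t • w)
  have hb_le : ∀ᶠ t in 𝓝[>] 0, w (b t) ≤ xss w := eventually_nhdsWithin_of_forall fun t ht => by
    have := hrel _ (hb t)
    simp only [sub_sub_cancel, map_smul, smul_eq_mul, sub_apply, dual_def] at this
    nlinarith [mem_Ioi.1 ht]
  have hb_tendsto : Tendsto b (𝓝 0) (𝓝 a) := by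
    rw [tendsto_iff_norm_sub_tendsto_zero]
    refine squeeze_zero (fun _ => norm_nonneg _) (fun t => hA.norm_sub_le hδ hα (hb t) ha) ?_
    have hcont : Continuous fun t : ℝ => (‖xs - t • w - xs‖ / δ) ^ (α - 1)⁻¹ :=
      (by fun_prop : Continuous fun t : ℝ => ‖xs - t • w - xs‖ / δ).rpow_const
        fun _ => Or.inr (inv_nonneg.2 (sub_nonneg.2 hα.le))
    simpa [Real.zero_rpow (inv_ne_zero (sub_ne_zero.2 hα.ne'))] using hcont.tendsto 0
  exact le_of_tendsto ((w.continuous.tendsto a).comp (hb_tendsto.mono_left nhdsWithin_le_nhds))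
    hb_le

end IsUniformlyMonotoneOp

theorem stmt8_general (A : Set (X × StrongDual ℝ X)) (hne : A.Nonempty)
    (hmono : IsMonotoneOp A) (δ α : ℝ) (hδ : 0 < δ) (hα : 1 < α)
    (hstrong : ∀ p ∈ A, ∀ q ∈ A, δ * ‖p.1 - q.1‖ ^ α ≤ (p.2 - q.2) (p.1 - q.1)) :
    IsUltraMaxMonotone A ↔ ranOp A = Set.univ := by
  refine ⟨fun hU => eq_univ_of_forall fun xs => ?_,
    IsUniformlyMonotoneOp.isUltraMaxMonotone hmono hstrong hδ hα⟩
  obtain ⟨xss, hxss⟩ :=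
    IsUniformlyMonotoneOp.exists_bidual_monotonicallyRelated hne hmono hstrong hδ hα xs
  obtain ⟨x, -, hx⟩ := hU.2 xss xs hxss
  exact ⟨x, hx⟩

theorem stmt8 [CompleteSpace X] (A : Set (X × StrongDual ℝ X)) (hne : A.Nonempty)
    (hmono : IsMonotoneOp A) (δ α : ℝ) (hδ : 0 < δ) (hα : 1 < α)
    (hstrong : ∀ p ∈ A, ∀ q ∈ A, δ * ‖p.1 - q.1‖ ^ α ≤ (p.2 - q.2) (p.1 - q.1)) :
    IsUltraMaxMonotone A ↔ ranOp A = Set.univ :=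
  stmt8_general A hne hmono δ α hδ hα hstrong
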